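/- arXiv:2405.08232 — 2 statements merged into one kernel-verified Lean document; each statement's English description precedes it below -/
import Mathlib

section
/- The Minkowski sum of the fixed-energy flexibility sets of N EVs with energies e_1,...,e_N (each with power rating m) equals the permutahedron Π(∑_{i=1}^N v(e_i)). -/
open Finset

/-- Fastest-charging profile: `m` for the first `⌊e/m⌋` coordinates,
`e - m⌊e/m⌋` in the next, `0` thereafter (0-based indexing). -/
noncomputable def vProf (T : ℕ) (m e : ℝ) : Fin T → ℝ :=
  fun t => if ((t : ℕ) : ℤ) < ⌊e / m⌋ then m
    else if ((t : ℕ) : ℤ) = ⌊e / m⌋ then e - m * (⌊e / m⌋ : ℝ)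
    else 0

/-- Partial sum of the first `s` coordinates of `x : Fin T → ℝ`. -/
noncomputable def pSum {T : ℕ} (x : Fin T → ℝ) (s : ℕ) : ℝ :=
  ∑ t : Fin T, if (t : ℕ) < s then x t else 0

/-- Permutahedron of `x`: convex hull of all coordinate permutations of `x`. -/
noncomputable def permSet {T : ℕ} (x : Fin T → ℝ) : Set (Fin T → ℝ) :=
  convexHull ℝ {y | ∃ π : Equiv.Perm (Fin T), y = x ∘ π}

/-!
Each `u ∈ F_i` has its `k` largest coordinates summing to at most `min (m k) e_i`, which is the
`k`-th partial sum of the nonincreasing profile `v(e_i)`; summing over `i`, every point of the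
Minkowski sum is majorized by `∑ v(e_i)`. By Rado's theorem majorized vectors lie in the
permutahedron: a linear functional separating `y` from it is beaten, after sorting its coefficients,
by a permutation of `∑ v(e_i)` (summation by parts). Conversely every permutation of `∑ v(e_i)` is
the sum of the same permutation of the `v(e_i) ∈ F_i`, and the Minkowski sum of convex sets is
convex.
-/

theorem sum_range_mul_le_of_sum_range_le {d b v : ℕ → ℝ} {n : ℕ}
    (hd : ∀ i, i + 1 < n → d (i + 1) ≤ d i)
    (hle : ∀ k < n, ∑ j ∈ range k, b j ≤ ∑ j ∈ range k, v j)
    (heq : ∑ j ∈ range n, b j = ∑ j ∈ range n, v j) :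
    ∑ i ∈ range n, d i * b i ≤ ∑ i ∈ range n, d i * v i := by
  have hb := sum_range_by_parts d b n
  have hv := sum_range_by_parts d v n
  simp only [smul_eq_mul] at hb hv
  rw [hb, hv, heq]
  refine sub_le_sub_left (sum_le_sum fun i hi => ?_) _
  rw [mem_range] at hi
  exact mul_le_mul_of_nonpos_left (hle (i + 1) (by omega)) (by linarith [hd i (by omega)])

section pSum

variable {T : ℕ}

def extendByZero (x : Fin T → ℝ) (i : ℕ) : ℝ := if h : i < T then x ⟨i, h⟩ else 0

@[simp]
theorem extendByZero_val (x : Fin T → ℝ) (t : Fin T) : extendByZero x t = x t := by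
  simp [extendByZero]

theorem pSum_eq_sum_range (x : Fin T → ℝ) (k : ℕ) :
    pSum x k = ∑ i ∈ range k, extendByZero x i := by
  calc pSum x k = ∑ i ∈ range T, if i < k then extendByZero x i else 0 := by
        rw [← Fin.sum_univ_eq_sum_range (fun i => if i < k then extendByZero x i else 0)]
        simp [pSum]
    _ = ∑ i ∈ range k, extendByZero x i := by
        rw [← sum_filter]
        refine sum_subset (fun i => by simp) fun i _ hi => ?_
        simp_all [extendByZero]

theorem pSum_top (x : Fin T → ℝ) : pSum x T = ∑ t, x t :=
  sum_congr rfl fun t _ => if_pos t.isLt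

theorem pSum_eq_sum_filter (x : Fin T → ℝ) (k : ℕ) :
    pSum x k = ∑ t ∈ univ.filter (fun t : Fin T => (t : ℕ) < k), x t :=
  (sum_filter _ _).symm

theorem pSum_sum {ι : Type*} (s : Finset ι) (x : ι → Fin T → ℝ) (k : ℕ) :
    pSum (∑ i ∈ s, x i) k = ∑ i ∈ s, pSum (x i) k := by
  simp only [pSum_eq_sum_filter, Finset.sum_apply]
  exact sum_comm

end pSum

theorem sum_mul_le_sum_mul_of_pSum_le {T : ℕ} {d b v : Fin T → ℝ} (hd : Antitone d)
    (hle : ∀ k < T, pSum b k ≤ pSum v k) (heq : ∑ t, b t = ∑ t, v t) :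
    ∑ t, d t * b t ≤ ∑ t, d t * v t := by
  have hext : ∀ x : Fin T → ℝ,
      ∑ t, d t * x t = ∑ i ∈ range T, extendByZero d i * extendByZero x i := fun x => by
    rw [← Fin.sum_univ_eq_sum_range (fun i => extendByZero d i * extendByZero x i)]
    simp
  rw [hext, hext]
  refine sum_range_mul_le_of_sum_range_le (fun i hi => ?_) (fun k hk => ?_) ?_
  · simpa [extendByZero, hi, (by omega : i < T)] using hd (Fin.mk_le_mk.2 (Nat.le_succ i))
  · simpa only [pSum_eq_sum_range] using hle k hk
  · simpa only [← pSum_eq_sum_range, pSum_top] using heq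

section vProf

variable {T : ℕ} {m e : ℝ}

theorem vProf_eq_min_sub_min (hm : 0 < m) (t : Fin T) :
    vProf T m e t = min (m * (t + 1)) e - min (m * t) e := by
  unfold vProf
  split_ifs with hlt heq
  · have : ((t + 1 : ℕ) : ℝ) ≤ e / m := Int.le_floor.1 (by push_cast; omega)
    rw [le_div_iff₀ hm] at this
    push_cast at this
    rw [min_eq_left (by linarith), min_eq_left (by nlinarith)]
    ring
  · have hfl : ⌊e / m⌋ = ((t : ℕ) : ℤ) := heq.symm
    have h1 : ((t : ℕ) : ℝ) ≤ e / m := by exact_mod_cast (Int.floor_eq_iff.1 hfl).1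
    have h2 : e / m < (t : ℕ) + 1 := by exact_mod_cast (Int.floor_eq_iff.1 hfl).2
    rw [le_div_iff₀ hm] at h1
    rw [div_lt_iff₀ hm] at h2
    rw [hfl, min_eq_right (by linarith), min_eq_left (by linarith)]
    push_cast; ring
  · have : e / m < ((t : ℕ) : ℤ) := Int.floor_lt.1 (by omega)
    rw [div_lt_iff₀ hm] at this
    push_cast at this
    rw [min_eq_right (by nlinarith), min_eq_right (by linarith)]
    ring

theorem vProf_mem_Icc (hm : 0 < m) (t : Fin T) : 0 ≤ vProf T m e t ∧ vProf T m e t ≤ m := by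
  rw [vProf_eq_min_sub_min hm]
  constructor <;> simp only [min_def] <;> split_ifs <;> nlinarith

theorem pSum_vProf (hm : 0 < m) (he : 0 ≤ e) {k : ℕ} (hk : k ≤ T) :
    pSum (vProf T m e) k = min (m * k) e := by
  have : ∀ i ∈ range k,
      extendByZero (vProf T m e) i = min (m * (i + 1 : ℕ)) e - min (m * i) e := by
    intro i hi
    rw [mem_range] at hi
    simp [extendByZero, (by omega : i < T), vProf_eq_min_sub_min hm]
  rw [pSum_eq_sum_range, sum_congr rfl this, sum_range_sub (fun i => min (m * i) e)]
  simp [he]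

theorem sum_vProf (hm : 0 < m) (he : 0 ≤ e ∧ e ≤ m * T) : ∑ t, vProf T m e t = e := by
  rw [← pSum_top, pSum_vProf hm he.1 le_rfl, min_eq_right he.2]

end vProf

section fixedEnergy

variable {T : ℕ} {m e : ℝ}

def fixedEnergySet (T : ℕ) (m e : ℝ) : Set (Fin T → ℝ) :=
  {u | (∀ t, 0 ≤ u t ∧ u t ≤ m) ∧ ∑ t, u t = e}

theorem convex_fixedEnergySet : Convex ℝ (fixedEnergySet T m e) := by
  rintro x ⟨hxb, hxs⟩ z ⟨hzb, hzs⟩ a b ha hb hab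
  refine ⟨fun t => ?_, ?_⟩
  · simp only [Pi.add_apply, Pi.smul_apply, smul_eq_mul]
    constructor <;> nlinarith [hxb t, hzb t]
  · simp only [Pi.add_apply, Pi.smul_apply, smul_eq_mul, sum_add_distrib, ← mul_sum, hxs, hzs]
    rw [← add_mul, hab, one_mul]

theorem vProf_comp_perm_mem_fixedEnergySet (hm : 0 < m) (he : 0 ≤ e ∧ e ≤ m * T)
    (π : Equiv.Perm (Fin T)) : vProf T m e ∘ π ∈ fixedEnergySet T m e :=
  ⟨fun t => vProf_mem_Icc hm (π t), (Equiv.sum_comp π _).trans (sum_vProf hm he)⟩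

end fixedEnergy

section Majorization

variable {T : ℕ}

/-- For nonincreasing `w` this is majorization `y ≺ w`; for other `w` it is stronger, since
`pSum w k` need not be the sum of the `k` largest entries of `w`. -/
def IsMajorizedBy (y w : Fin T → ℝ) : Prop :=
  ∑ t, y t = ∑ t, w t ∧ ∀ S : Finset (Fin T), ∑ t ∈ S, y t ≤ pSum w #S

theorem isMajorizedBy_vProf {m e : ℝ} (hm : 0 < m) {u : Fin T → ℝ}
    (hu : u ∈ fixedEnergySet T m e) : IsMajorizedBy u (vProf T m e) := by
  obtain ⟨hbox, hsum⟩ := hu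
  have he : 0 ≤ e := hsum ▸ sum_nonneg fun t _ => (hbox t).1
  have heT : e ≤ m * T := by
    simpa [← hsum, mul_comm] using sum_le_card_nsmul univ u m fun t _ => (hbox t).2
  refine ⟨by rw [hsum, sum_vProf hm ⟨he, heT⟩], fun S => ?_⟩
  rw [pSum_vProf hm he (card_le_univ S |>.trans_eq (Fintype.card_fin T))]
  refine le_min ?_ ?_
  · simpa [mul_comm] using sum_le_card_nsmul S u m fun t _ => (hbox t).2
  · exact hsum ▸ sum_le_sum_of_subset_of_nonneg (subset_univ S) fun t _ _ => (hbox t).1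

theorem IsMajorizedBy.sum {ι : Type*} {s : Finset ι} {y w : ι → Fin T → ℝ}
    (h : ∀ i ∈ s, IsMajorizedBy (y i) (w i)) : IsMajorizedBy (∑ i ∈ s, y i) (∑ i ∈ s, w i) := by
  refine ⟨?_, fun S => ?_⟩
  · simp only [Finset.sum_apply]
    rw [sum_comm, sum_comm (f := fun t i => w i t)]
    exact sum_congr rfl fun i hi => (h i hi).1
  · simp only [Finset.sum_apply, pSum_sum]
    rw [sum_comm]
    exact sum_le_sum fun i hi => (h i hi).2 S

theorem IsMajorizedBy.pSum_comp_le {y w : Fin T → ℝ} (h : IsMajorizedBy y w)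
    (σ : Equiv.Perm (Fin T)) {k : ℕ} (hk : k ≤ T) : pSum (y ∘ σ) k ≤ pSum w k := by
  have := h.2 ((univ.filter fun t : Fin T => (t : ℕ) < k).map σ.toEmbedding)
  rwa [sum_map, card_map, Fin.card_filter_val_lt, min_eq_right hk, ← pSum_eq_sum_filter] at this

theorem IsMajorizedBy.mem_permSet {y w : Fin T → ℝ} (h : IsMajorizedBy y w) :
    y ∈ permSet w := by
  by_contra hy
  have hfin : {z | ∃ π : Equiv.Perm (Fin T), z = w ∘ π}.Finite :=
    (Set.finite_range fun π : Equiv.Perm (Fin T) => w ∘ π).subset fun _ ⟨π, hπ⟩ => ⟨π, hπ.symm⟩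
  obtain ⟨f, u, hlt, hu⟩ := geometric_hahn_banach_closed_point (convex_convexHull ℝ _)
    (hfin.isClosed_convexHull (𝕜 := ℝ)) hy
  set c : Fin T → ℝ := fun t => f fun j => if t = j then 1 else 0
  have hf : ∀ z, f z = ∑ t, c t * z t := fun z => by
    simpa [mul_comm] using f.toLinearMap.pi_apply_eq_sum_univ z
  set σ := Tuple.sort (OrderDual.toDual ∘ c)
  have hanti : Antitone (c ∘ σ) :=
    monotone_toDual_comp_iff.1 (Tuple.monotone_sort (OrderDual.toDual ∘ c))
  have hle : f y ≤ f (w ∘ σ.symm) := by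
    rw [hf, hf, ← Equiv.sum_comp σ, ← Equiv.sum_comp σ (fun t => c t * (w ∘ σ.symm) t)]
    simp only [Function.comp_apply, Equiv.symm_apply_apply]
    refine sum_mul_le_sum_mul_of_pSum_le (b := y ∘ σ) hanti (fun k hk => h.pSum_comp_le σ hk.le) ?_
    rw [← h.1]
    exact Equiv.sum_comp σ y
  linarith [hlt _ (subset_convexHull ℝ _ ⟨σ.symm, rfl⟩)]

end Majorization

open Pointwise in
theorem minkowski_sum_fixedEnergy (T N : ℕ) (m : ℝ) (hm : 0 < m)
    (e : Fin N → ℝ) (he : ∀ i, 0 ≤ e i ∧ e i ≤ m * T) :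
    (∑ i : Fin N, {u : Fin T → ℝ | (∀ t, 0 ≤ u t ∧ u t ≤ m) ∧ ∑ t, u t = e i}) =
      permSet (∑ i, vProf T m (e i)) := by
  change ∑ i, fixedEnergySet T m (e i) = _
  refine Set.Subset.antisymm (fun y hy => ?_) (convexHull_min ?_ ?_)
  · obtain ⟨u, hu, rfl⟩ := (Set.mem_fintype_sum _ y).1 hy
    exact (IsMajorizedBy.sum fun i _ => isMajorizedBy_vProf hm (hu i)).mem_permSet
  · rintro _ ⟨π, rfl⟩
    refine (Set.mem_fintype_sum _ _).2
      ⟨fun i => vProf T m (e i) ∘ π, fun i => vProf_comp_perm_mem_fixedEnergySet hm (he i) π, ?_⟩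
    ext t
    simp [Finset.sum_apply]
  · exact convex_sum _ fun i _ => convex_fixedEnergySet
end

section
/- The aggregate (Minkowski-sum) flexibility set of N EVs with energy intervals [ē^lower_i, ē^upper_i] equals {u ∈ ℝ^T : ∑ ē^lower_i ≤ ∑_t u_t ≤ ∑ ē^upper_i, and u is 'inter-majorized' between ν_lower = ∑_i v(ē^lower_i) and ν_upper = ∑_i v(ē^upper_i)}; in particular it equals the convex hull of the T+1 permutahedra Π(μ_t), where μ_{t,s} = (ν_lower)_s for t < s and (ν_upper)_s for t ≥ s. -/
/-!
The right-hand side is the convex hull of finitely many generators `μ_t ∘ π`, so by Hahn–Banach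
the inclusion `⊆` follows once every linear functional `φ` attains its maximum over the Minkowski
sum at a generator; `⊇` follows from convexity of the sum once each generator lies in it.

For `⊇`, `μ_t ∘ π = ∑ i, μ_t^i ∘ π`, where `μ_t^i` is built from `v(ē^lower_i)` and
`v(ē^upper_i)`; it lies coordinatewise between these two profiles, hence in `F_i`.

For `⊆`, sort the coefficients of `φ` decreasingly and let `k` be the number of nonnegative ones.
Every `u ∈ F_i` satisfies the prefix bounds `∑_{s<j} u_s ≤ min(j, ē^upper_i)` and the suffix
bounds `∑_{s≥j} u_s ≥ ē^lower_i - min(j, ē^lower_i)`, with equality for `v(ē^upper_i)` and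
`v(ē^lower_i)` respectively. Abel summation against the positive and the negative part of the
sorted coefficients shows that the reordered `μ_k^i` maximizes `φ` over `F_i`. Since `k` and the
ordering do not depend on `i`, summing over `i` exhibits the reordered `μ_k` as a maximizer over
the whole sum.
-/

open Finset

/-- Vertex generators `μ_t` built from lower/upper aggregate profiles. -/
noncomputable def muVert (T : ℕ) (νl νu : Fin T → ℝ) (t : Fin (T + 1)) : Fin T → ℝ :=
  fun s => if (t : ℕ) ≤ (s : ℕ) then νl s else νu s

theorem subset_convexHull_of_forall_exists_le {E : Type*} [AddCommGroup E] [Module ℝ E]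
    [TopologicalSpace E] [IsTopologicalAddGroup E] [ContinuousSMul ℝ E] [LocallyConvexSpace ℝ E]
    [T2Space E] {A G : Set E} (hG : G.Finite)
    (h : ∀ φ : StrongDual ℝ E, ∃ y ∈ G, ∀ a ∈ A, φ a ≤ φ y) : A ⊆ convexHull ℝ G := by
  intro a ha
  by_contra hnot
  obtain ⟨φ, r, hlt, hgt⟩ :=
    geometric_hahn_banach_closed_point (convex_convexHull ℝ G) (hG.isClosed_convexHull ℝ) hnot
  obtain ⟨y, hy, hmax⟩ := h φ
  linarith [hlt y (subset_convexHull ℝ G hy), hmax a ha]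

section PSum

variable {T : ℕ}

theorem pSum_sub (x y : Fin T → ℝ) (j : ℕ) :
    pSum (fun t => x t - y t) j = pSum x j - pSum y j := by
  simp only [pSum, ← sum_sub_distrib]
  refine sum_congr rfl fun t _ => ?_
  split_ifs <;> simp

theorem pSum_of_le (x : Fin T → ℝ) {j : ℕ} (hj : T ≤ j) : pSum x j = ∑ t, x t :=
  sum_congr rfl fun t _ => if_pos (t.isLt.trans_le hj)

theorem pSum_le_sum {x : Fin T → ℝ} (hx : ∀ t, 0 ≤ x t) (j : ℕ) : pSum x j ≤ ∑ t, x t :=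
  sum_le_sum fun t _ => by split_ifs; exacts [le_rfl, hx t]

theorem pSum_eq_sum_range_s12 (f : ℕ → ℝ) {j : ℕ} (hj : j ≤ T) :
    pSum (fun t : Fin T => f t) j = ∑ n ∈ range j, f n := by
  rw [pSum, Fin.sum_univ_eq_sum_range (fun n => if n < j then f n else 0), ← sum_filter]
  congr 1
  ext n
  simp only [mem_filter, mem_range]
  omega

theorem pSum_le_of_le_one {x : Fin T → ℝ} (hx : ∀ t, x t ≤ 1) {j : ℕ} (hj : j ≤ T) :
    pSum x j ≤ j :=
  calc pSum x j ≤ pSum (fun _ : Fin T => (1 : ℝ)) j :=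
        sum_le_sum fun t _ => by split_ifs; exacts [hx t, le_rfl]
    _ = j := by simp [pSum_eq_sum_range_s12 (fun _ => (1 : ℝ)) hj]

theorem pSum_comp_castSucc (x : Fin (T + 1) → ℝ) {j : ℕ} (hj : j ≤ T) :
    pSum (x ∘ Fin.castSucc) j = pSum x j := by
  simp [pSum, Fin.sum_univ_castSucc (fun t : Fin (T + 1) => if (t : ℕ) < j then x t else 0),
    hj.not_gt]

theorem pSum_comp_rev (x : Fin T → ℝ) {j : ℕ} (hj : j ≤ T) :
    pSum (x ∘ Fin.rev) j = ∑ t, x t - pSum x (T - j) := by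
  rw [pSum, pSum, ← sum_sub_distrib, ← Equiv.sum_comp Fin.revPerm (fun t => x t - _)]
  refine sum_congr rfl fun t _ => ?_
  have := t.isLt
  simp only [Function.comp_apply, Fin.revPerm_apply, Fin.val_rev]
  split_ifs <;> first | (exfalso; omega) | ring

end PSum

theorem sum_mul_nonpos_of_pSum_nonpos {T : ℕ} {x d : Fin T → ℝ} (hd : Antitone d)
    (hd0 : ∀ t, 0 ≤ d t) (hx : ∀ j ≤ T, pSum x j ≤ 0) : ∑ t, x t * d t ≤ 0 := by
  induction T with
  | zero => simp
  | succ T ih =>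
    have hsplit : ∑ t, x t * d t = ∑ t : Fin T, x t.castSucc * (d t.castSucc - d (Fin.last T))
        + (∑ t, x t) * d (Fin.last T) := by
      simp only [Fin.sum_univ_castSucc, mul_sub, sum_sub_distrib, add_mul, sum_mul]
      ring
    have hinit : ∑ t : Fin T, x t.castSucc * (d t.castSucc - d (Fin.last T)) ≤ 0 :=
      ih (fun s t hst => sub_le_sub_right (hd (Fin.castSucc_le_castSucc_iff.2 hst)) _)
        (fun t => sub_nonneg.2 (hd (Fin.le_last _)))
        fun j hj => pSum_comp_castSucc x hj ▸ hx j (hj.trans T.le_succ)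
    have htotal : (∑ t, x t) * d (Fin.last T) ≤ 0 :=
      mul_nonpos_of_nonpos_of_nonneg (pSum_of_le x le_rfl ▸ hx (T + 1) le_rfl) (hd0 _)
    linarith

theorem sum_mul_nonpos_of_sum_le_pSum {T : ℕ} {x d : Fin T → ℝ} (hd : Monotone d)
    (hd0 : ∀ t, 0 ≤ d t) (hx : ∀ j ≤ T, ∑ t, x t ≤ pSum x j) : ∑ t, x t * d t ≤ 0 := by
  have := sum_mul_nonpos_of_pSum_nonpos (x := x ∘ Fin.rev) (hd.comp_antitone Fin.rev_anti)
    (fun t => hd0 _) fun j hj => by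
      rw [pSum_comp_rev x hj]
      linarith [hx (T - j) (Nat.sub_le T j)]
  simpa using (Equiv.sum_comp Fin.revPerm fun t => x t * d t) ▸ this

section VProf

variable {T : ℕ}

theorem vProf_one_apply (e : ℝ) (t : Fin T) : vProf T 1 e t = max 0 (min 1 (e - t)) := by
  simp only [vProf, div_one, one_mul]
  rcases lt_trichotomy ((t : ℕ) : ℤ) ⌊e⌋ with h | h | h
  · have : (t : ℝ) + 1 ≤ e := by exact_mod_cast Int.le_floor.1 (Int.add_one_le_of_lt h)
    rw [if_pos h, min_eq_left (by linarith), max_eq_right zero_le_one]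
  · obtain ⟨h1, h2⟩ := Int.floor_eq_iff.1 h.symm
    push_cast at h1 h2
    rw [if_neg h.not_lt, if_pos h, ← h, min_eq_right (by linarith), max_eq_right (by linarith)]
    push_cast
    ring
  · have : e < t := by exact_mod_cast Int.floor_lt.1 h
    rw [if_neg (by omega), if_neg (by omega), min_eq_right (by linarith),
      max_eq_left (by linarith)]

theorem vProf_one_nonneg (e : ℝ) (t : Fin T) : 0 ≤ vProf T 1 e t := by
  rw [vProf_one_apply]
  exact le_max_left _ _

theorem vProf_one_le_one (e : ℝ) (t : Fin T) : vProf T 1 e t ≤ 1 := by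
  rw [vProf_one_apply]
  exact max_le zero_le_one (min_le_left _ _)

theorem vProf_one_mono {e e' : ℝ} (he : e ≤ e') (t : Fin T) : vProf T 1 e t ≤ vProf T 1 e' t := by
  simp only [vProf_one_apply]
  gcongr

theorem sum_range_max_zero_min_one {e : ℝ} (he : 0 ≤ e) (j : ℕ) :
    ∑ n ∈ range j, max 0 (min 1 (e - n)) = min (j : ℝ) e := by
  induction j with
  | zero => simp [he]
  | succ j ih =>
    rw [sum_range_succ, ih]
    push_cast
    simp only [min_def, max_def]
    split_ifs <;> linarith

theorem pSum_vProf_one {e : ℝ} (he : 0 ≤ e) {j : ℕ} (hj : j ≤ T) :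
    pSum (vProf T 1 e) j = min (j : ℝ) e := by
  rw [funext (vProf_one_apply e), pSum_eq_sum_range_s12 (fun n : ℕ => max 0 (min 1 (e - n))) hj,
    sum_range_max_zero_min_one he]

theorem sum_vProf_one {e : ℝ} (he : 0 ≤ e) (heT : e ≤ T) : ∑ t, vProf T 1 e t = e := by
  rw [← pSum_of_le _ le_rfl, pSum_vProf_one he le_rfl, min_eq_right heT]

end VProf

theorem muVert_sum {ι : Type*} {T : ℕ} (s : Finset ι) (νl νu : ι → Fin T → ℝ) (k : Fin (T + 1)) :
    muVert T (∑ i ∈ s, νl i) (∑ i ∈ s, νu i) k = ∑ i ∈ s, muVert T (νl i) (νu i) k := by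
  ext t
  by_cases h : (k : ℕ) ≤ t <;> simp [muVert, h]

def flexSet (T : ℕ) (a b : ℝ) : Set (Fin T → ℝ) :=
  {u | (∀ t, 0 ≤ u t ∧ u t ≤ 1) ∧ a ≤ ∑ t, u t ∧ ∑ t, u t ≤ b}

section FlexSet

variable {T : ℕ} {a b : ℝ} {w : Fin T → ℝ}

theorem convex_flexSet : Convex ℝ (flexSet T a b) := by
  have hsum : IsLinearMap ℝ fun u : Fin T → ℝ => ∑ t, u t :=
    ⟨fun u v => sum_add_distrib, fun c u => by simp [mul_sum]⟩
  have hF : flexSet T a b = Set.Icc 0 1 ∩ ({u | a ≤ ∑ t, u t} ∩ {u | ∑ t, u t ≤ b}) := by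
    ext u
    simp [flexSet, Pi.le_def, forall_and]
  rw [hF]
  exact (convex_Icc 0 1).inter
    ((convex_halfSpace_ge hsum a).inter (convex_halfSpace_le hsum b))

theorem comp_perm_mem_flexSet (hw : w ∈ flexSet T a b) (σ : Equiv.Perm (Fin T)) :
    w ∘ σ ∈ flexSet T a b := by
  obtain ⟨hbox, ha, hb⟩ := hw
  have hsum : ∑ t, (w ∘ σ) t = ∑ t, w t := Equiv.sum_comp σ w
  exact ⟨fun t => hbox (σ t), hsum ▸ ha, hsum ▸ hb⟩

theorem pSum_le_pSum_vProf_of_mem_flexSet (hw : w ∈ flexSet T a b) {j : ℕ} (hj : j ≤ T) :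
    pSum w j ≤ pSum (vProf T 1 b) j := by
  obtain ⟨hbox, -, hb⟩ := hw
  have hw0 : ∀ t, 0 ≤ w t := fun t => (hbox t).1
  rw [pSum_vProf_one ((sum_nonneg fun t _ => hw0 t).trans hb) hj]
  exact le_min (pSum_le_of_le_one (fun t => (hbox t).2) hj) ((pSum_le_sum hw0 j).trans hb)

theorem sum_sub_pSum_vProf_le_of_mem_flexSet (hw : w ∈ flexSet T a b) (ha : 0 ≤ a) (haT : a ≤ T)
    {j : ℕ} (hj : j ≤ T) :
    ∑ t, vProf T 1 a t - pSum (vProf T 1 a) j ≤ ∑ t, w t - pSum w j := by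
  obtain ⟨hbox, ha', -⟩ := hw
  rw [sum_vProf_one ha haT, pSum_vProf_one ha hj]
  have hj' := pSum_le_of_le_one (fun t => (hbox t).2) hj
  have htot := pSum_le_sum (fun t => (hbox t).1) j
  rcases le_total (j : ℝ) a with h | h
  · rw [min_eq_left h]
    linarith
  · rw [min_eq_right h]
    linarith

theorem muVert_vProf_mem_flexSet (ha : 0 ≤ a) (hab : a ≤ b) (hbT : b ≤ T) (k : Fin (T + 1)) :
    muVert T (vProf T 1 a) (vProf T 1 b) k ∈ flexSet T a b := by
  have hlo : ∀ t, vProf T 1 a t ≤ muVert T (vProf T 1 a) (vProf T 1 b) k t := fun t => by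
    unfold muVert
    split_ifs
    exacts [le_rfl, vProf_one_mono hab t]
  have hhi : ∀ t, muVert T (vProf T 1 a) (vProf T 1 b) k t ≤ vProf T 1 b t := fun t => by
    unfold muVert
    split_ifs
    exacts [vProf_one_mono hab t, le_rfl]
  refine ⟨fun t => ⟨(vProf_one_nonneg a t).trans (hlo t), (hhi t).trans (vProf_one_le_one b t)⟩,
    ?_, ?_⟩
  · calc a = ∑ t, vProf T 1 a t := (sum_vProf_one ha (hab.trans hbT)).symm
      _ ≤ _ := sum_le_sum fun t _ => hlo t
  · calc _ ≤ ∑ t, vProf T 1 b t := sum_le_sum fun t _ => hhi t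
      _ = b := sum_vProf_one (ha.trans hab) hbT

theorem sum_mul_le_sum_muVert_mul {d : Fin T → ℝ} (hd : Antitone d) {k : Fin (T + 1)}
    (hk : ∀ t : Fin T, (t : ℕ) < k ↔ 0 ≤ d t) (ha : 0 ≤ a) (hab : a ≤ b) (hbT : b ≤ T)
    (hw : w ∈ flexSet T a b) :
    ∑ t, w t * d t ≤ ∑ t, muVert T (vProf T 1 a) (vProf T 1 b) k t * d t := by
  set μ := muVert T (vProf T 1 a) (vProf T 1 b) k
  -- `μ` is `vProf T 1 b` where `d ≥ 0` and `vProf T 1 a` where `d < 0`.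
  have hsplit : ∀ t, (w t - μ t) * d t =
      (w t - vProf T 1 b t) * max (d t) 0 + (vProf T 1 a t - w t) * max (-d t) 0 := by
    intro t
    by_cases h : (t : ℕ) < k
    · have h0 := (hk t).1 h
      simp only [μ, muVert, if_neg (not_le.2 h), max_eq_left h0, max_eq_right (neg_nonpos.2 h0)]
      ring
    · have h0 : d t ≤ 0 := (not_le.1 (mt (hk t).2 h)).le
      simp only [μ, muVert, if_pos (not_lt.1 h), max_eq_right h0, max_eq_left (neg_nonneg.2 h0)]
      ring
  have hpos : ∑ t, (w t - vProf T 1 b t) * max (d t) 0 ≤ 0 :=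
    sum_mul_nonpos_of_pSum_nonpos (fun s t hst => max_le_max (hd hst) le_rfl)
      (fun t => le_max_right _ _) fun j hj => by
        rw [pSum_sub]
        exact sub_nonpos.2 (pSum_le_pSum_vProf_of_mem_flexSet hw hj)
  have hneg : ∑ t, (vProf T 1 a t - w t) * max (-d t) 0 ≤ 0 :=
    sum_mul_nonpos_of_sum_le_pSum (fun s t hst => max_le_max (neg_le_neg (hd hst)) le_rfl)
      (fun t => le_max_right _ _) fun j hj => by
        rw [pSum_sub, sum_sub_distrib]
        linarith [sum_sub_pSum_vProf_le_of_mem_flexSet hw ha (hab.trans hbT) hj]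
  have : ∑ t, (w t - μ t) * d t ≤ 0 := by
    rw [sum_congr rfl fun t _ => hsplit t, sum_add_distrib]
    linarith
  simpa only [sub_mul, sum_sub_distrib, sub_nonpos] using this

theorem exists_muVert_comp_perm_maximizes (φ : (Fin T → ℝ) →ₗ[ℝ] ℝ) :
    ∃ (k : Fin (T + 1)) (σ : Equiv.Perm (Fin T)), ∀ ⦃a b : ℝ⦄, 0 ≤ a → a ≤ b → b ≤ T →
      ∀ w ∈ flexSet T a b, φ w ≤ φ (muVert T (vProf T 1 a) (vProf T 1 b) k ∘ σ) := by
  set c : Fin T → ℝ := fun s => φ fun t => if s = t then 1 else 0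
  have hφ : ∀ x, φ x = ∑ s, x s * c s := fun x => φ.pi_apply_eq_sum_univ x
  -- `τ` sorts the coefficients `c` of `φ` decreasingly; `k` counts the nonnegative ones.
  set τ := Tuple.sort (OrderDual.toDual ∘ c)
  have hd : Antitone (c ∘ τ) :=
    monotone_toDual_comp_iff.1 (Tuple.monotone_sort (OrderDual.toDual ∘ c))
  let k : Fin (T + 1) :=
    ⟨#{t | 0 ≤ (c ∘ τ) t}, Nat.lt_succ_of_le (card_le_univ _ |>.trans_eq (Fintype.card_fin T))⟩
  refine ⟨k, τ.symm, fun a b ha hab hbT w hw => ?_⟩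
  have key := sum_mul_le_sum_muVert_mul hd (k := k)
    (fun t => Tuple.lt_card_ge_iff_apply_ge_of_antitone hd) ha hab hbT (comp_perm_mem_flexSet hw τ)
  rw [hφ, hφ, ← Equiv.sum_comp τ, ← Equiv.sum_comp τ (fun s => (_ ∘ τ.symm) s * c s)]
  simpa using key

end FlexSet

open Pointwise in
theorem aggregate_flexSet_eq_convexHull (T N : ℕ)
    (el eu : Fin N → ℝ) (h : ∀ i, 0 ≤ el i ∧ el i ≤ eu i ∧ eu i ≤ (T : ℝ)) :
    (∑ i : Fin N, {u : Fin T → ℝ | (∀ t, 0 ≤ u t ∧ u t ≤ 1) ∧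
        el i ≤ ∑ t, u t ∧ ∑ t, u t ≤ eu i}) =
      convexHull ℝ {y | ∃ (t : Fin (T + 1)) (π : Equiv.Perm (Fin T)),
        y = (muVert T (∑ i, vProf T 1 (el i)) (∑ i, vProf T 1 (eu i)) t) ∘ π} := by
  set μ := muVert T (∑ i, vProf T 1 (el i)) (∑ i, vProf T 1 (eu i))
  have hμ (k : Fin (T + 1)) (π : Equiv.Perm (Fin T)) :
      μ k ∘ π = ∑ i, muVert T (vProf T 1 (el i)) (vProf T 1 (eu i)) k ∘ π := by
    ext s
    simp [μ, muVert_sum, Finset.sum_apply]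
  apply Set.Subset.antisymm
  · have hfin : {y | ∃ (t : Fin (T + 1)) (π : Equiv.Perm (Fin T)), y = μ t ∘ π}.Finite :=
      (Set.finite_range fun p : Fin (T + 1) × Equiv.Perm (Fin T) => μ p.1 ∘ p.2).subset
        fun _ ⟨k, π, hy⟩ => ⟨(k, π), hy.symm⟩
    refine subset_convexHull_of_forall_exists_le hfin fun φ => ?_
    obtain ⟨k, σ, hmax⟩ := exists_muVert_comp_perm_maximizes (φ : (Fin T → ℝ) →ₗ[ℝ] ℝ)
    refine ⟨_, ⟨k, σ, rfl⟩, fun u hu => ?_⟩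
    obtain ⟨w, hw, rfl⟩ := (Set.mem_fintype_sum _ u).1 hu
    rw [hμ, map_sum, map_sum]
    exact sum_le_sum fun i _ => hmax (h i).1 (h i).2.1 (h i).2.2 (w i) (hw i)
  · refine convexHull_min ?_ (convex_sum _ fun i _ => convex_flexSet)
    rintro _ ⟨k, π, rfl⟩
    rw [hμ]
    exact Set.finsetSum_mem_finsetSum _ _ _ fun i _ =>
      comp_perm_mem_flexSet (muVert_vProf_mem_flexSet (h i).1 (h i).2.1 (h i).2.2 k) π
end
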